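/- arXiv:2303.04152 — 2 statements merged into one kernel-verified Lean document; each statement's English description precedes it below -/
import Mathlib

section
/- For every integer n ≥ 1, the bipartite achievement number of the balanced double star satisfies ba(S_{n,n}) = 2n + 1. -/
namespace AchievementGame

/-- A strategy for the achievement game: given the history of all moves played so far
(earliest first), produce the next move (an edge, i.e. an element of `Sym2`). -/
def Strategy (α : Type*) : Type _ := List (Sym2 α) → Sym2 α

/-- A strategy is valid for the host graph `G` if, whenever some edge of `G` is still
uncolored, it chooses an uncolored edge of `G`. -/
def Strategy.Valid {α : Type*} (G : SimpleGraph α) (s : Strategy α) : Prop :=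
  ∀ l : List (Sym2 α), (∃ e ∈ G.edgeSet, e ∉ l) → s l ∈ G.edgeSet ∧ s l ∉ l

/-- The history of the first `n` moves when Alice plays strategy `σ` and Bob plays
strategy `τ`; Alice moves first and the players alternate. -/
def hist {α : Type*} (σ τ : Strategy α) : ℕ → List (Sym2 α)
  | 0 => []
  | n + 1 => hist σ τ n ++ [(if n % 2 = 0 then σ else τ) (hist σ τ n)]

/-- The `n`-th move (0-indexed): even indices are Alice's (blue) moves,
odd indices are Bob's (red) moves. -/
def move {α : Type*} (σ τ : Strategy α) (n : ℕ) : Sym2 α :=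
  (if n % 2 = 0 then σ else τ) (hist σ τ n)

/-- The set `s` of edges contains a copy of the graph `F`. -/
def HasCopy {α β : Type*} (F : SimpleGraph β) (s : Set (Sym2 α)) : Prop :=
  ∃ f : β ↪ α, ∀ a b, F.Adj a b → s(f a, f b) ∈ s

/-- Alice has a winning strategy in the achievement game `(F, G, +)`: Alice has a valid
strategy such that against every valid strategy of Bob, at some legal move of Alice
(her `(k+1)`-st move, which exists since `2k+1 ≤ |E(G)|`) the blue edges contain a copy
of `F`, while the red edges played strictly before do not. -/
def AliceWins {α β : Type*} (F : SimpleGraph β) (G : SimpleGraph α) : Prop :=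
  ∃ σ : Strategy α, Strategy.Valid G σ ∧ ∀ τ : Strategy α, Strategy.Valid G τ →
    ∃ k : ℕ, 2 * k + 1 ≤ G.edgeSet.ncard ∧
      HasCopy F {e | ∃ i ≤ k, e = move σ τ (2 * i)} ∧
      ¬ HasCopy F {e | ∃ i < k, e = move σ τ (2 * i + 1)}

/-- The matching `mK₂` consisting of `m` pairwise disjoint edges. -/
def matching (m : ℕ) : SimpleGraph (Fin m ⊕ Fin m) :=
  SimpleGraph.fromRel (fun a b => ∃ i, a = Sum.inl i ∧ b = Sum.inr i)

/-- The star `K_{1,m}`: the center `0` joined to `m` leaves. -/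
def star (m : ℕ) : SimpleGraph (Fin (m + 1)) :=
  SimpleGraph.fromRel (fun a _ => a = 0)

/-- The double star `S_{m,n}`: disjoint stars `K_{1,m}` and `K_{1,n}` with an edge
joining their centers `Sum.inl 0` and `Sum.inr 0`. -/
def doubleStar (m n : ℕ) : SimpleGraph (Fin (m + 1) ⊕ Fin (n + 1)) :=
  SimpleGraph.fromRel (fun a b =>
    (a = Sum.inl 0 ∧ ∃ i, b = Sum.inl i) ∨
    (a = Sum.inr 0 ∧ ∃ j, b = Sum.inr j) ∨
    (a = Sum.inl 0 ∧ b = Sum.inr 0))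

/-- The disjoint union `K_{1,m} ∪ nK₂` of a star and a matching. -/
def starMatching (m n : ℕ) : SimpleGraph (Fin (m + 1) ⊕ (Fin n ⊕ Fin n)) :=
  SimpleGraph.fromRel (fun a b =>
    (a = Sum.inl 0 ∧ ∃ i, b = Sum.inl i) ∨
    (∃ i, a = Sum.inr (Sum.inl i) ∧ b = Sum.inr (Sum.inr i)))

end AchievementGame

/-!
Lower bound. On `K_{N,N}` Bob answers every move of Alice at the same left vertex as long as
that vertex still has an uncolored edge. Then after each move of Alice every left vertex has
blue degree at most `(N + 1) / 2`. One center of a blue `S_{n,n}` lies on the left and has blue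
degree `n + 1`, so `2n + 1 ≤ N`.

Upper bound. On `K_{2n+1,2n+1}` Alice spends her first `n + 1` moves on a star at a left
vertex `x`. Bob's first `n + 1` moves touch its `n + 1` leaves at most `n + 1` times in total, so
some leaf `y` is touched at most once. Alice then joins `y` to `n` further left vertices: before
her `i`-th such move at most `1 + 2(i - 1) < 2n` of the `2n` edges from `y` to the left vertices
other than `x` are colored. After `2n + 1` moves she owns an `S_{n,n}` with centers `x` and `y`,
while Bob owns only `2n` edges.
-/

namespace AchievementGame

open Finset Sum

local notation "K[" N "]" => completeBipartiteGraph (Fin N) (Fin N)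

variable {α : Type*}

section Play

variable (σ τ : Strategy α)

lemma hist_succ (t : ℕ) : hist σ τ (t + 1) = hist σ τ t ++ [move σ τ t] := rfl

@[simp]
lemma length_hist (t : ℕ) : (hist σ τ t).length = t := by
  induction t with
  | zero => rfl
  | succ t ih => simp [hist_succ, ih]

lemma getD_hist {i t : ℕ} (h : i < t) (d : Sym2 α) : (hist σ τ t).getD i d = move σ τ i := by
  induction t with
  | zero => omega
  | succ t ih =>
    rcases Nat.lt_succ_iff_lt_or_eq.1 h with h | rfl
    · rw [hist_succ, List.getD_append _ _ _ _ (by simpa using h), ih h]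
    · simp [hist_succ]

lemma mem_hist_iff {e : Sym2 α} {t : ℕ} : e ∈ hist σ τ t ↔ ∃ i < t, move σ τ i = e := by
  induction t with
  | zero => simp [hist]
  | succ t ih =>
    simp only [hist_succ, List.mem_append, ih, List.mem_singleton, Nat.lt_succ_iff_lt_or_eq]
    grind

lemma hist_prefix {t t' : ℕ} (h : t ≤ t') : hist σ τ t <+: hist σ τ t' := by
  induction t', h using Nat.le_induction with
  | base => exact List.prefix_refl _
  | succ t' _ ih => exact ih.trans (by rw [hist_succ]; exact List.prefix_append _ _)

lemma move_even (i : ℕ) : move σ τ (2 * i) = σ (hist σ τ (2 * i)) := by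
  simp [move]

lemma move_odd (i : ℕ) : move σ τ (2 * i + 1) = τ (hist σ τ (2 * i + 1)) := by
  simp [move, Nat.add_mod]

lemma exists_mem_notMem_hist [DecidableEq α] {P : Finset (Sym2 α)} {t : ℕ}
    (h : #{i ∈ range t | move σ τ i ∈ P} < #P) : ∃ e ∈ P, e ∉ hist σ τ t := by
  by_contra! hP
  have hcover : P ⊆ image (move σ τ) {i ∈ range t | move σ τ i ∈ P} := fun e he => by
    obtain ⟨i, hi, rfl⟩ := (mem_hist_iff σ τ).1 (hP e he)
    exact mem_image_of_mem _ (by simp [hi, he])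
  exact h.not_ge ((card_le_card hcover).trans card_image_le)

end Play

section Legal

variable {G : SimpleGraph α} {σ τ : Strategy α} (hσ : σ.Valid G) (hτ : τ.Valid G)
include hσ hτ

lemma move_mem_edgeSet_and_notMem_hist {t : ℕ} (ht : t < G.edgeSet.ncard) :
    move σ τ t ∈ G.edgeSet ∧ move σ τ t ∉ hist σ τ t := by
  classical
  have hfree : ∃ e ∈ G.edgeSet, e ∉ hist σ τ t := by
    refine Set.exists_mem_notMem_of_ncard_lt_ncard (s := {e | e ∈ hist σ τ t}) ?_
      (hist σ τ t).finite_toSet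
    calc {e | e ∈ hist σ τ t}.ncard = #(hist σ τ t).toFinset := by
          rw [← Set.ncard_coe_finset]; simp
      _ ≤ t := by simpa using List.toFinset_card_le (hist σ τ t)
      _ < _ := ht
  unfold move
  split
  exacts [hσ _ hfree, hτ _ hfree]

lemma move_injOn : Set.InjOn (move σ τ) (Set.Iio G.edgeSet.ncard) := by
  intro i hi j hj hij
  by_contra hne
  rcases Nat.lt_or_gt_of_ne hne with h | h
  · exact (move_mem_edgeSet_and_notMem_hist hσ hτ hj).2 ((mem_hist_iff σ τ).2 ⟨i, h, hij⟩)
  · exact (move_mem_edgeSet_and_notMem_hist hσ hτ hi).2 ((mem_hist_iff σ τ).2 ⟨j, h, hij.symm⟩)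

lemma card_filter_move_mem_le [DecidableEq α] {t : ℕ} (ht : t ≤ G.edgeSet.ncard)
    (P : Finset (Sym2 α)) : #{i ∈ range t | move σ τ i ∈ P} ≤ #P :=
  card_le_card_of_injOn (move σ τ) (fun i hi => by simp_all)
    ((move_injOn hσ hτ).mono fun i hi => by simp at hi; simp; omega)

lemma blue_subset_edgeSet {k : ℕ} (hk : 2 * k + 1 ≤ G.edgeSet.ncard) :
    {e | ∃ i ≤ k, e = move σ τ (2 * i)} ⊆ G.edgeSet := by
  rintro _ ⟨i, hi, rfl⟩
  exact (move_mem_edgeSet_and_notMem_hist hσ hτ (by omega)).1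

end Legal

section Prefer

variable [Nonempty (Sym2 α)] (G : SimpleGraph α) (P : List (Sym2 α) → Sym2 α → Prop)

open Classical in
noncomputable def Strategy.prefer : Strategy α := fun l =>
  if ∃ e ∈ G.edgeSet, e ∉ l ∧ P l e then Classical.epsilon fun e => e ∈ G.edgeSet ∧ e ∉ l ∧ P l e
  else Classical.epsilon fun e => e ∈ G.edgeSet ∧ e ∉ l

lemma Strategy.prefer_valid : (Strategy.prefer G P).Valid G := by
  intro l hl
  unfold prefer
  split_ifs with h
  · exact (Classical.epsilon_spec h).imp_right And.left
  · exact Classical.epsilon_spec hl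

lemma Strategy.prefer_spec {l : List (Sym2 α)} (h : ∃ e ∈ G.edgeSet, e ∉ l ∧ P l e) :
    P l (Strategy.prefer G P l) := by
  unfold prefer
  rw [if_pos h]
  exact (Classical.epsilon_spec h).2.2

end Prefer

section CompleteBipartite

variable {V W : Type*} {e : Sym2 (V ⊕ W)}

lemma mem_edgeSet_completeBipartiteGraph :
    e ∈ (completeBipartiteGraph V W).edgeSet ↔ ∃ a b, e = s(inl a, inr b) := by
  simp [SimpleGraph.edgeSet_completeBipartiteGraph, eq_comm]

lemma exists_eq_of_inl_mem (he : e ∈ (completeBipartiteGraph V W).edgeSet) {a : V}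
    (ha : inl a ∈ e) : ∃ b, e = s(inl a, inr b) := by
  obtain ⟨a', b, rfl⟩ := mem_edgeSet_completeBipartiteGraph.1 he
  simp_all

lemma ncard_edgeSet_completeBipartiteGraph [Fintype V] [Fintype W] :
    (completeBipartiteGraph V W).edgeSet.ncard = Fintype.card V * Fintype.card W := by
  rw [Set.ncard, SimpleGraph.encard_edgeSet_completeBipartiteGraph, ENat.card_eq_coe_fintype_card,
    ENat.card_eq_coe_fintype_card, ← Nat.cast_mul, ENat.toNat_natCast]

lemma exists_notMem_hist_of_inl_mem_move {σ τ : Strategy (V ⊕ W)}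
    (hσ : σ.Valid (completeBipartiteGraph V W)) (hτ : τ.Valid (completeBipartiteGraph V W))
    {t : ℕ} (ht : t < (completeBipartiteGraph V W).edgeSet.ncard) {a : V}
    (ha : inl a ∈ move σ τ t) : ∃ b, s(inl a, inr b) ∉ hist σ τ t := by
  obtain ⟨hE, hfresh⟩ := move_mem_edgeSet_and_notMem_hist hσ hτ ht
  obtain ⟨b, hb⟩ := exists_eq_of_inl_mem hE ha
  exact ⟨b, hb ▸ hfresh⟩

end CompleteBipartite

section DoubleStar

variable {m n : ℕ}

-- The double star is the union of the stars `K_{1,m+1}` and `K_{1,n+1}` in which each center is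
-- a leaf of the other one: exchanging `inl 0` and `inr 0` exposes this form.
lemma hasCopy_doubleStar_iff {s : Set (Sym2 α)} :
    HasCopy (doubleStar m n) s ↔ ∃ g : Fin (m + 1) ⊕ Fin (n + 1) ↪ α,
      (∀ i, s(g (inr 0), g (inl i)) ∈ s) ∧ ∀ j, s(g (inl 0), g (inr j)) ∈ s := by
  set c := Equiv.swap (inl 0 : Fin (m + 1) ⊕ Fin (n + 1)) (inr 0)
  constructor
  · rintro ⟨f, hf⟩
    refine ⟨c.toEmbedding.trans f, fun i => ?_, fun j => ?_⟩
    · by_cases hi : i = 0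
      · subst hi
        simpa [c] using hf _ _ (by simp [doubleStar])
      · simpa [c, hi, Equiv.swap_apply_of_ne_of_ne] using
          hf (inl 0) (inl i) (by simp [doubleStar, Ne.symm hi])
    · by_cases hj : j = 0
      · subst hj
        simpa [c] using hf _ _ (by simp [doubleStar])
      · simpa [c, hj, Equiv.swap_apply_of_ne_of_ne] using
          hf (inr 0) (inr j) (by simp [doubleStar, Ne.symm hj])
  · rintro ⟨g, hl, hr⟩
    refine ⟨c.toEmbedding.trans g, ?_⟩
    have key : ∀ p q, p ≠ q → ((p = inl 0 ∧ ∃ i, q = inl i) ∨ (p = inr 0 ∧ ∃ j, q = inr j) ∨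
        (p = inl 0 ∧ q = inr 0)) → s(g (c p), g (c q)) ∈ s := by
      rintro p q hpq (⟨rfl, i, rfl⟩ | ⟨rfl, j, rfl⟩ | ⟨rfl, rfl⟩)
      · have hi : i ≠ 0 := by rintro rfl; exact hpq rfl
        simpa [c, hi, Equiv.swap_apply_of_ne_of_ne] using hl i
      · have hj : j ≠ 0 := by rintro rfl; exact hpq rfl
        simpa [c, hj, Equiv.swap_apply_of_ne_of_ne] using hr j
      · simpa [c] using hl 0
    intro p q hpq
    rcases (SimpleGraph.fromRel_adj _ _ _).1 hpq with ⟨hne, h | h⟩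
    · exact key p q hne h
    · simpa [Sym2.eq_swap] using key q p hne.symm h

lemma le_ncard_of_hasCopy_doubleStar {s : Set (Sym2 α)} (hs : s.Finite)
    (h : HasCopy (doubleStar m n) s) : m + n + 1 ≤ s.ncard := by
  obtain ⟨g, hl, hr⟩ := hasCopy_doubleStar_iff.1 h
  have : Finite s := hs
  let edge : Fin (m + 1) ⊕ Fin n → s := Sum.elim (fun i => ⟨_, hl i⟩) (fun j => ⟨_, hr j.succ⟩)
  have hedge : Function.Injective edge := by
    rintro (i | j) (i' | j') h <;>
      simp [edge, g.injective.eq_iff, (Fin.succ_ne_zero _).symm] at h <;> simp [h]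
  simpa [Nat.card_sum, add_right_comm] using Nat.card_le_card_of_injective edge hedge

lemma not_hasCopy_doubleStar_of_le {k : ℕ} (hk : k ≤ m + n) (σ τ : Strategy α) :
    ¬ HasCopy (doubleStar m n) {e | ∃ i < k, e = move σ τ (2 * i + 1)} := by
  classical
  intro h
  have hred : {e | ∃ i < k, e = move σ τ (2 * i + 1)} =
      ↑((range k).image fun i => move σ τ (2 * i + 1)) := by
    ext
    simp [eq_comm]
  have := le_ncard_of_hasCopy_doubleStar (hred ▸ finite_toSet _) h
  rw [hred, Set.ncard_coe_finset] at this
  have := card_image_le (s := range k) (f := fun i => move σ τ (2 * i + 1))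
  simp only [card_range] at this
  omega

variable {V W : Type*} {s : Set (Sym2 (V ⊕ W))}

lemma exists_inl_star_of_hasCopy_doubleStar (hs : s ⊆ (completeBipartiteGraph V W).edgeSet)
    (h : HasCopy (doubleStar n n) s) :
    ∃ a, ∃ f : Fin (n + 1) → V ⊕ W, Function.Injective f ∧ ∀ j, s(inl a, f j) ∈ s := by
  obtain ⟨g, hl, hr⟩ := hasCopy_doubleStar_iff.1 h
  obtain ⟨a, b, hab⟩ := mem_edgeSet_completeBipartiteGraph.1 (hs (hl 0))
  rcases Sym2.eq_iff.1 hab with ⟨h1, -⟩ | ⟨-, h2⟩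
  · exact ⟨a, g ∘ inl, g.injective.comp inl_injective, fun i => h1 ▸ hl i⟩
  · exact ⟨a, g ∘ inr, g.injective.comp inr_injective, fun j => h2 ▸ hr j⟩

lemma hasCopy_doubleStar_of_stars {ρ : Fin (m + 1) → W} {u : Fin (n + 1) → V}
    (hρ : Function.Injective ρ) (hu : Function.Injective u)
    (hρs : ∀ i, s(inl (u 0), inr (ρ i)) ∈ s) (hus : ∀ j, s(inl (u j), inr (ρ 0)) ∈ s) :
    HasCopy (doubleStar m n) s :=
  hasCopy_doubleStar_iff.2
    ⟨⟨Sum.elim (inr ∘ ρ) (inl ∘ u), (inr_injective.comp hρ).sumElim (inl_injective.comp hu)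
      (by simp)⟩, fun i => by simpa using hρs i, fun j => by simpa [Sym2.eq_swap] using hus j⟩

end DoubleStar

section ColorDegree

variable [DecidableEq α] (σ τ : Strategy α)

-- `c = 0` counts Alice's (blue) edges, `c = 1` Bob's (red) ones.
def colorDeg (c t : ℕ) (x : α) : ℕ := #{i ∈ range t | i % 2 = c ∧ x ∈ move σ τ i}

lemma colorDeg_succ (c t : ℕ) (x : α) : colorDeg σ τ c (t + 1) x =
    colorDeg σ τ c t x + if t % 2 = c ∧ x ∈ move σ τ t then 1 else 0 := by
  simp only [colorDeg, card_filter, sum_range_succ]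

lemma colorDeg_zero_two_mul_succ (t : ℕ) (x : α) : colorDeg σ τ 0 (2 * (t + 1)) x =
    colorDeg σ τ 0 (2 * t) x + if x ∈ move σ τ (2 * t) then 1 else 0 := by
  simp [show 2 * (t + 1) = 2 * t + 1 + 1 by ring, colorDeg_succ, Nat.add_mod]

lemma colorDeg_one_two_mul_succ (t : ℕ) (x : α) : colorDeg σ τ 1 (2 * (t + 1)) x =
    colorDeg σ τ 1 (2 * t) x + if x ∈ move σ τ (2 * t + 1) then 1 else 0 := by
  simp [show 2 * (t + 1) = 2 * t + 1 + 1 by ring, colorDeg_succ, Nat.add_mod]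

lemma colorDeg_mono (c : ℕ) (x : α) : Monotone (colorDeg σ τ c · x) :=
  fun _ _ h => card_le_card (filter_subset_filter _ (range_subset_range.2 h))

lemma le_colorDeg_of_injective {x : α} {m k : ℕ} {f : Fin m → α} (hf : Function.Injective f)
    (hblue : ∀ j, s(x, f j) ∈ {e | ∃ i ≤ k, e = move σ τ (2 * i)}) :
    m ≤ colorDeg σ τ 0 (2 * k + 1) x := by
  choose idx hidx hmove using hblue
  calc m = #(univ : Finset (Fin m)) := by simp
    _ ≤ _ := by
      refine card_le_card_of_injOn (fun j => 2 * idx j) (fun j _ => ?_) (fun j _ j' _ h => ?_)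
      · have := hidx j
        simp only [coe_filter, mem_range, Set.mem_ofPred_eq]
        exact ⟨by omega, by omega, hmove j ▸ Sym2.mem_mk_left _ _⟩
      · have : s(x, f j) = s(x, f j') := by rw [hmove, hmove, show idx j = idx j' by simpa using h]
        exact hf (Sym2.congr_right.1 this)

variable {G : SimpleGraph α} {σ τ} (hσ : σ.Valid G) (hτ : τ.Valid G)
include hσ hτ

lemma colorDeg_zero_add_colorDeg_one_le {t : ℕ} (ht : t ≤ G.edgeSet.ncard) {x : α}
    {I : Finset (Sym2 α)} (hI : ∀ e ∈ G.edgeSet, x ∈ e → e ∈ I) :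
    colorDeg σ τ 0 t x + colorDeg σ τ 1 t x ≤ #I := by
  rw [colorDeg, colorDeg, ← card_union_of_disjoint (disjoint_filter.2 fun _ _ h h' => by omega)]
  refine (card_le_card fun i hi => ?_).trans (card_filter_move_mem_le hσ hτ ht I)
  simp only [mem_union, mem_filter, mem_range] at hi ⊢
  have hit : i < t := by tauto
  exact ⟨hit, hI _ (move_mem_edgeSet_and_notMem_hist hσ hτ (by omega)).1 (by tauto)⟩

end ColorDegree

section Bob

variable {V W : Type*} [Nonempty (Sym2 (V ⊕ W))]

noncomputable def bob : Strategy (V ⊕ W) :=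
  Strategy.prefer (completeBipartiteGraph V W) fun l e =>
    ∃ a, inl a ∈ e ∧ ∃ d ∈ l.getLast?, inl a ∈ d

lemma bob_valid : (bob : Strategy (V ⊕ W)).Valid (completeBipartiteGraph V W) :=
  Strategy.prefer_valid _ _

lemma inl_mem_bob {l : List (Sym2 (V ⊕ W))} {d : Sym2 (V ⊕ W)} (hd : l.getLast? = some d)
    (hdE : d ∈ (completeBipartiteGraph V W).edgeSet) {a : V} (had : inl a ∈ d)
    (hfree : ∃ b, s(inl a, inr b) ∉ l) : inl a ∈ bob l := by
  obtain ⟨b, hb⟩ := hfree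
  obtain ⟨a', ha', d', hd', had'⟩ := Strategy.prefer_spec (completeBipartiteGraph V W)
    (fun l e => ∃ a, inl a ∈ e ∧ ∃ d ∈ l.getLast?, inl a ∈ d)
    ⟨_, mem_edgeSet_completeBipartiteGraph.2 ⟨a, b, rfl⟩, hb, a, by simp, d, hd, had⟩
  obtain ⟨b', rfl⟩ := exists_eq_of_inl_mem hdE had
  obtain rfl : s(inl a, inr b') = d' := by simpa [hd] using hd'
  obtain rfl : a' = a := by simpa using had'
  exact ha'

variable [DecidableEq V] [DecidableEq W] {σ : Strategy (V ⊕ W)}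
  (hσ : σ.Valid (completeBipartiteGraph V W))
include hσ

-- Bob matches each blue edge at `inl a` by a red one, except possibly the move of Alice that left
-- no uncolored edge at `inl a`; after it she cannot play there again.
lemma colorDeg_bob_invariant {t : ℕ} (ht : 2 * t ≤ (completeBipartiteGraph V W).edgeSet.ncard)
    (a : V) :
    colorDeg σ bob 0 (2 * t) (inl a) ≤ colorDeg σ bob 1 (2 * t) (inl a) ∨
      (∀ b, s(inl a, inr b) ∈ hist σ bob (2 * t)) ∧
        colorDeg σ bob 0 (2 * t) (inl a) ≤ colorDeg σ bob 1 (2 * t) (inl a) + 1 := by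
  induction t with
  | zero => simp [colorDeg]
  | succ t ih =>
    have hB := colorDeg_zero_two_mul_succ σ bob t (inl a)
    have hR := colorDeg_one_two_mul_succ σ bob t (inl a)
    have hgrow : ∀ {t'}, t' ≤ 2 * (t + 1) → ∀ e ∈ hist σ bob t', e ∈ hist σ bob (2 * (t + 1)) :=
      fun h e he => (hist_prefix σ bob h).subset he
    by_cases hA : inl a ∈ move σ bob (2 * t)
    · have hle : colorDeg σ bob 0 (2 * t) (inl a) ≤ colorDeg σ bob 1 (2 * t) (inl a) := by
        refine (ih (by omega)).resolve_right fun ⟨hsat, _⟩ => ?_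
        obtain ⟨b, hb⟩ := exists_notMem_hist_of_inl_mem_move hσ bob_valid (by omega) hA
        exact hb (hsat b)
      by_cases hfree : ∃ b, s(inl a, inr b) ∉ hist σ bob (2 * t + 1)
      · have hanswer : inl a ∈ move σ bob (2 * t + 1) := by
          rw [move_odd]
          exact inl_mem_bob (by simp [hist_succ])
            (move_mem_edgeSet_and_notMem_hist hσ bob_valid (by omega)).1 hA hfree
        left
        rw [hB, hR, if_pos hA, if_pos hanswer]
        omega
      · push Not at hfree
        right
        refine ⟨fun b => hgrow (by omega) _ (hfree b), ?_⟩
        rw [hB, hR, if_pos hA]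
        split <;> omega
    · have hRmono := colorDeg_mono σ bob 1 (inl a) (show 2 * t ≤ 2 * (t + 1) by omega)
      rw [hB, if_neg hA, add_zero]
      rcases ih (by omega) with h | ⟨hsat, h⟩
      · left; omega
      · right; exact ⟨fun b => hgrow (by omega) _ (hsat b), by omega⟩

lemma two_mul_colorDeg_bob_le [Fintype W] {k : ℕ}
    (hk : 2 * k + 1 ≤ (completeBipartiteGraph V W).edgeSet.ncard) (a : V) :
    2 * colorDeg σ bob 0 (2 * k + 1) (inl a) ≤ Fintype.card W + 1 := by
  have hsum := colorDeg_zero_add_colorDeg_one_le hσ bob_valid hk (x := inl a)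
    (I := univ.image fun b => s(inl a, inr b)) fun e he ha => by
      obtain ⟨b, rfl⟩ := exists_eq_of_inl_mem he ha
      simp
  have hI : #(univ.image fun b : W => (s(inl a, inr b) : Sym2 (V ⊕ W))) ≤ Fintype.card W :=
    card_image_le
  have hB : colorDeg σ bob 0 (2 * k + 1) (inl a) =
      colorDeg σ bob 0 (2 * k) (inl a) + if inl a ∈ move σ bob (2 * k) then 1 else 0 := by
    simp [colorDeg_succ]
  have hR : colorDeg σ bob 1 (2 * k + 1) (inl a) = colorDeg σ bob 1 (2 * k) (inl a) := by
    simp [colorDeg_succ]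
  rcases colorDeg_bob_invariant hσ (t := k) (by omega) a with h | ⟨hsat, h⟩
  · split at hB <;> omega
  · have hA : inl a ∉ move σ bob (2 * k) := fun hA => by
      obtain ⟨b, hb⟩ := exists_notMem_hist_of_inl_mem_move hσ bob_valid (by omega) hA
      exact hb (hsat b)
    rw [if_neg hA] at hB
    omega

end Bob

theorem two_mul_add_one_le_card_of_aliceWins {V W : Type*} [Fintype W] {n : ℕ}
    (h : AliceWins (doubleStar n n) (completeBipartiteGraph V W)) :
    2 * n + 1 ≤ Fintype.card W := by
  classical
  obtain ⟨σ, hσ, hwin⟩ := h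
  have : Nonempty (Sym2 (V ⊕ W)) := ⟨σ []⟩
  obtain ⟨k, hk, hblue, -⟩ := hwin bob bob_valid
  obtain ⟨a, f, hf, hfa⟩ :=
    exists_inl_star_of_hasCopy_doubleStar (blue_subset_edgeSet hσ bob_valid hk) hblue
  have := le_colorDeg_of_injective σ bob hf hfa
  have := two_mul_colorDeg_bob_le hσ hk a
  omega

section Hub

variable {V W : Type*}

-- `g` is read as a play: Alice's moves at even indices, Bob's at odd ones.
def IsHub (x : V) (n : ℕ) (g : ℕ → Sym2 (V ⊕ W)) (w : W) : Prop :=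
  (∃ m ≤ n, g (2 * m) = s(inl x, inr w)) ∧ {m | m ≤ n ∧ inr w ∈ g (2 * m + 1)}.Subsingleton

lemma isHub_congr {x : V} {n : ℕ} {g g' : ℕ → Sym2 (V ⊕ W)} (h : ∀ i < 2 * n + 2, g i = g' i) :
    IsHub x n g = IsHub x n g' := by
  have h0 : ∀ m ≤ n, g (2 * m) = g' (2 * m) := fun m hm => h _ (by omega)
  have h1 : ∀ m ≤ n, g (2 * m + 1) = g' (2 * m + 1) := fun m hm => h _ (by omega)
  ext w
  refine and_congr (exists_congr fun m => and_congr_right fun hm => by rw [h0 m hm]) ?_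
  rw [show {m | m ≤ n ∧ inr w ∈ g (2 * m + 1)} = {m | m ≤ n ∧ inr w ∈ g' (2 * m + 1)} from
    Set.ext fun m => and_congr_right fun hm => by rw [h1 m hm]]

lemma exists_isHub {x : V} {n : ℕ} {g : ℕ → Sym2 (V ⊕ W)}
    (hred : ∀ m ≤ n, g (2 * m + 1) ∈ (completeBipartiteGraph V W).edgeSet)
    {wit : Fin (n + 1) → W} (hwit : Function.Injective wit)
    (hg : ∀ m : Fin (n + 1), g (2 * m) = s(inl x, inr (wit m))) : ∃ w, IsHub x n g w := by
  classical
  by_contra! hno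
  -- Double counting: every leaf `wit m` is touched by at least two of Bob's first `n + 1`
  -- moves, and each of these moves touches at most one vertex of the right class.
  have hcount := card_mul_le_card_mul (fun w m => inr w ∈ g (2 * m + 1))
    (s := univ.image wit) (t := range (n + 1)) (m := 2) (n := 1) ?_ ?_
  · rw [card_image_of_injective _ hwit, card_univ, Fintype.card_fin, card_range] at hcount
    omega
  · intro w hw
    obtain ⟨m, -, rfl⟩ := mem_image.1 hw
    obtain ⟨m₁, ⟨hm₁, h₁⟩, m₂, ⟨hm₂, h₂⟩, hne⟩ :=
      Set.not_subsingleton_iff.1 fun hs => hno _ ⟨⟨m, by omega, hg m⟩, hs⟩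
    exact one_lt_card.2 ⟨m₁, (mem_bipartiteAbove _).2 ⟨by simp; omega, h₁⟩,
      m₂, (mem_bipartiteAbove _).2 ⟨by simp; omega, h₂⟩, hne⟩
  · intro m hm
    obtain ⟨a, b, hab⟩ :=
      mem_edgeSet_completeBipartiteGraph.1 (hred m (by simpa [Nat.lt_succ_iff] using hm))
    refine card_le_one.2 fun w hw w' hw' => ?_
    simp only [bipartiteBelow, mem_filter, hab] at hw hw'
    simp_all

end Hub

section Alice

variable (n : ℕ)

-- Only read once the history is longer than `2 * n + 1`, so the `default` entries never matter.
noncomputable def hub (l : List (Sym2 (Fin (2 * n + 1) ⊕ Fin (2 * n + 1)))) : Fin (2 * n + 1) :=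
  Classical.epsilon (IsHub 0 n fun i => l.getD i default)

noncomputable def alice : Strategy (Fin (2 * n + 1) ⊕ Fin (2 * n + 1)) :=
  Strategy.prefer K[2 * n + 1] fun l e =>
    if l.length < 2 * n + 2 then inl 0 ∈ e else ∃ w ≠ 0, e = s(inl w, inr (hub n l))

lemma alice_valid : (alice n).Valid K[2 * n + 1] := Strategy.prefer_valid _ _

lemma alice_spec {l : List (Sym2 (Fin (2 * n + 1) ⊕ Fin (2 * n + 1)))}
    (h : ∃ e ∈ K[2 * n + 1].edgeSet, e ∉ l ∧
      if l.length < 2 * n + 2 then inl 0 ∈ e else ∃ w ≠ 0, e = s(inl w, inr (hub n l))) :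
    if l.length < 2 * n + 2 then inl 0 ∈ alice n l
    else ∃ w ≠ 0, alice n l = s(inl w, inr (hub n l)) :=
  Strategy.prefer_spec _ (fun l e => if l.length < 2 * n + 2 then inl 0 ∈ e
    else ∃ w ≠ 0, e = s(inl w, inr (hub n l))) h

def hubEdges (v : Fin (2 * n + 1)) : Finset (Sym2 (Fin (2 * n + 1) ⊕ Fin (2 * n + 1))) :=
  (univ.erase 0).image fun w => s(inl w, inr v)

variable {n}

lemma card_hubEdges (v : Fin (2 * n + 1)) : #(hubEdges n v) = 2 * n := by
  rw [hubEdges, card_image_of_injective _ fun w w' h => by simpa using h]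
  simp

lemma mem_hubEdges {v : Fin (2 * n + 1)} {e : Sym2 (Fin (2 * n + 1) ⊕ Fin (2 * n + 1))} :
    e ∈ hubEdges n v ↔ ∃ w ≠ 0, e = s(inl w, inr v) := by
  simp [hubEdges, eq_comm]

variable {τ : Strategy (Fin (2 * n + 1) ⊕ Fin (2 * n + 1))}

lemma hub_hist {t : ℕ} (ht : 2 * n + 2 ≤ t) :
    hub n (hist (alice n) τ t) = Classical.epsilon (IsHub 0 n (move (alice n) τ)) := by
  unfold hub
  rw [isHub_congr fun i hi => getD_hist _ _ (by omega) _]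

variable (hτ : τ.Valid K[2 * n + 1])
include hτ

lemma exists_move_alice_eq_inl_zero {m : ℕ} (hm : m ≤ n) :
    ∃ w, move (alice n) τ (2 * m) = s(inl 0, inr w) := by
  obtain ⟨e, he, hel⟩ : ∃ e ∈ univ.image fun w => s(inl 0, inr w),
      e ∉ hist (alice n) τ (2 * m) := by
    refine exists_mem_notMem_hist _ _ ((card_filter_le _ _).trans_lt ?_)
    rw [card_image_of_injective _ fun w w' h => by simpa using h]
    simp
    omega
  obtain ⟨w, -, rfl⟩ := mem_image.1 he
  have hE := (move_mem_edgeSet_and_notMem_hist (alice_valid n) hτ (t := 2 * m)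
    (by rw [ncard_edgeSet_completeBipartiteGraph, Fintype.card_fin]; nlinarith)).1
  have hearly : (hist (alice n) τ (2 * m)).length < 2 * n + 2 := by simp; omega
  have := alice_spec n ⟨_, mem_edgeSet_completeBipartiteGraph.2 ⟨0, w, rfl⟩, hel,
    by rw [if_pos hearly]; simp⟩
  rw [if_pos hearly, ← move_even (alice n) τ m] at this
  exact exists_eq_of_inl_mem hE this

-- Alice's first `n + 1` moves are not in `hubEdges n v`, and Bob's are in it at most once.
lemma card_filter_move_mem_hubEdges_le_one {v : Fin (2 * n + 1)}
    (hv : IsHub 0 n (move (alice n) τ) v) :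
    #{j ∈ range (2 * n + 2) | move (alice n) τ j ∈ hubEdges n v} ≤ 1 := by
  have hodd : ∀ j ∈ ({j ∈ range (2 * n + 2) | move (alice n) τ j ∈ hubEdges n v} : Finset ℕ),
      ∃ m ≤ n, j = 2 * m + 1 ∧ inr v ∈ move (alice n) τ (2 * m + 1) := by
    intro j hj
    obtain ⟨hj, hjP⟩ := mem_filter.1 hj
    obtain ⟨w, hw0, hw⟩ := mem_hubEdges.1 hjP
    obtain ⟨m, rfl | rfl⟩ := Nat.even_or_odd' j
    · obtain ⟨w', hw'⟩ := exists_move_alice_eq_inl_zero hτ (m := m) (by simp at hj; omega)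
      rw [hw'] at hw
      exact absurd (by simp at hw; exact hw.1.symm) hw0
    · exact ⟨m, by simp at hj; omega, rfl, by simp [hw]⟩
  refine card_le_one.2 fun j hj j' hj' => ?_
  obtain ⟨m, hm, rfl, hmv⟩ := hodd j hj
  obtain ⟨m', hm', rfl, hmv'⟩ := hodd j' hj'
  rw [hv.2 ⟨hm, hmv⟩ ⟨hm', hmv'⟩]

lemma exists_move_alice_eq_inr_hub {v : Fin (2 * n + 1)} (hv : IsHub 0 n (move (alice n) τ) v)
    (hhub : Classical.epsilon (IsHub 0 n (move (alice n) τ)) = v) {i : ℕ} (hi : 1 ≤ i)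
    (hin : i ≤ n) : ∃ w ≠ 0, move (alice n) τ (2 * (n + i)) = s(inl w, inr v) := by
  obtain ⟨e, he, hel⟩ : ∃ e ∈ hubEdges n v, e ∉ hist (alice n) τ (2 * (n + i)) := by
    refine exists_mem_notMem_hist _ _ (lt_of_le_of_lt ?_
      (show 2 * i - 1 < #(hubEdges n v) by rw [card_hubEdges]; omega))
    calc #{j ∈ range (2 * (n + i)) | move (alice n) τ j ∈ hubEdges n v}
        ≤ #({j ∈ range (2 * n + 2) | move (alice n) τ j ∈ hubEdges n v} ∪
            Ico (2 * n + 2) (2 * (n + i))) := by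
          refine card_le_card fun j hj => ?_
          simp only [mem_filter, mem_range, mem_union, mem_Ico] at hj ⊢
          rcases lt_or_ge j (2 * n + 2) with h | h
          exacts [Or.inl ⟨h, hj.2⟩, Or.inr ⟨h, hj.1⟩]
      _ ≤ 1 + (2 * (n + i) - (2 * n + 2)) := (card_union_le _ _).trans
          (by simp [card_filter_move_mem_hubEdges_le_one hτ hv])
      _ = 2 * i - 1 := by omega
  obtain ⟨w, hw, rfl⟩ := mem_hubEdges.1 he
  have hlate : ¬ (hist (alice n) τ (2 * (n + i))).length < 2 * n + 2 := by simp; omega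
  have hhub' : hub n (hist (alice n) τ (2 * (n + i))) = v := by rw [hub_hist (by omega), hhub]
  have := alice_spec n ⟨_, mem_edgeSet_completeBipartiteGraph.2 ⟨w, v, rfl⟩, hel, by
    rw [if_neg hlate, hhub']; exact ⟨w, hw, rfl⟩⟩
  rw [if_neg hlate, hhub'] at this
  rwa [move_even]

lemma hasCopy_doubleStar_alice (hn : 1 ≤ n) :
    HasCopy (doubleStar n n) {e | ∃ i ≤ 2 * n, e = move (alice n) τ (2 * i)} := by
  have hlt : ∀ i ≤ 4 * n, i < K[2 * n + 1].edgeSet.ncard := fun i hi => by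
    rw [ncard_edgeSet_completeBipartiteGraph, Fintype.card_fin]; nlinarith
  have hinj := move_injOn (alice_valid n) hτ
  choose wit hwit using fun m : Fin (n + 1) => exists_move_alice_eq_inl_zero hτ m.is_le
  have hwit_inj : Function.Injective wit := fun m m' h => by
    have := hinj (hlt (2 * m) (by omega)) (hlt (2 * m') (by omega)) (by rw [hwit, hwit, h])
    ext; omega
  set v := Classical.epsilon (IsHub 0 n (move (alice n) τ))
  have hv : IsHub 0 n (move (alice n) τ) v := Classical.epsilon_spec <|
    exists_isHub (fun m hm => (move_mem_edgeSet_and_notMem_hist (alice_valid n) hτ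
      (hlt _ (by omega))).1) hwit_inj hwit
  obtain ⟨m₀, hm₀, hm₀v⟩ := hv.1
  set c : Fin (n + 1) := ⟨m₀, by omega⟩
  have hc : wit c = v := by
    have := hwit c
    rw [show (c : ℕ) = m₀ from rfl, hm₀v] at this
    simpa using this.symm
  choose u hu0 hu using fun j : Fin n =>
    exists_move_alice_eq_inr_hub hτ hv rfl (i := j + 1) (by omega) (by omega)
  refine hasCopy_doubleStar_of_stars (ρ := wit ∘ Equiv.swap 0 c) (u := Fin.cons 0 u)
    (hwit_inj.comp (Equiv.injective _)) ?_
    (fun i => ⟨_, by have := (Equiv.swap 0 c i).is_le; omega, (hwit _).symm⟩) ?_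
  · refine Fin.cons_injective_iff.2 ⟨fun ⟨j, hj⟩ => hu0 j hj, fun j j' h => ?_⟩
    have := hinj (hlt (2 * (n + (j + 1))) (by omega)) (hlt (2 * (n + (j' + 1))) (by omega))
      (by rw [hu, hu, h])
    ext; omega
  · refine Fin.cases ⟨m₀, by omega, ?_⟩ (fun j => ⟨n + (j + 1), by omega, ?_⟩)
    · simp [hc, hm₀v]
    · simp [hc, hu]

end Alice

theorem aliceWins_doubleStar {n : ℕ} (hn : 1 ≤ n) : AliceWins (doubleStar n n) K[2 * n + 1] :=
  ⟨alice n, alice_valid n, fun _ hτ =>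
    ⟨2 * n, by rw [ncard_edgeSet_completeBipartiteGraph, Fintype.card_fin]; nlinarith,
      hasCopy_doubleStar_alice hτ hn, not_hasCopy_doubleStar_of_le (two_mul n).le _ _⟩⟩

end AchievementGame

open AchievementGame

/-- For every integer `n ≥ 1`, the bipartite achievement number of the balanced double
star satisfies `ba(S_{n,n}) = 2n + 1`: the least `N` for which Alice has a winning
strategy in `(S_{n,n}, K_{N,N}, +)` is `2n + 1`. -/
theorem stmt3 (n : ℕ) (hn : 1 ≤ n) :
    IsLeast {N : ℕ | AliceWins (doubleStar n n)
      (completeBipartiteGraph (Fin N) (Fin N))} (2 * n + 1) :=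
  ⟨aliceWins_doubleStar hn, fun N hN => by
    simpa using two_mul_add_one_le_card_of_aliceWins hN⟩
end

section
/- Let m, n be integers with 1 ≤ m < n ≤ 2m. If Alice has a winning strategy in the achievement game (S_{m,n}, K_{n_1,n_2}, +), then max{n_1, n_2} ≥ 2m + 1. -/
/-!
Bob answers every edge Alice colors at a left vertex `v` of `K_{n₁,n₂}` with an edge at `v`, as long
as `v` still has a free edge. Then Alice's blue degree at `v` never exceeds Bob's red degree there
by more than one, so it stays at most `(n₂ + 1) / 2`. In a blue copy of `S_{m,n}` the edge joining
the two centers has a left endpoint, and both centers have degree at least `m + 1` since `m < n`;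
hence `2 (m + 1) ≤ n₂ + 1`.
-/

namespace AchievementGame

open Finset SimpleGraph

section Play

variable {V : Type*} {σ τ : Strategy V}

lemma hist_eq_map_range (σ τ : Strategy V) (t : ℕ) :
    hist σ τ t = (List.range t).map (move σ τ) := by
  induction t with
  | zero => rfl
  | succ t ih =>
    show hist σ τ t ++ [move σ τ t] = _
    rw [ih, List.range_succ, List.map_append, List.map_singleton]

lemma mem_hist {t : ℕ} {e : Sym2 V} : e ∈ hist σ τ t ↔ ∃ j < t, move σ τ j = e := by
  simp [hist_eq_map_range]

lemma hist_subset_hist {t t' : ℕ} (h : t ≤ t') : hist σ τ t ⊆ hist σ τ t' := fun _ he =>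
  have ⟨j, hj, hje⟩ := mem_hist.mp he
  mem_hist.mpr ⟨j, hj.trans_le h, hje⟩

lemma exists_mem_edgeSet_notMem (G : SimpleGraph V) (l : List (Sym2 V))
    (h : l.length < G.edgeSet.ncard) : ∃ e ∈ G.edgeSet, e ∉ l := by
  classical
  by_contra! hl
  have := Set.ncard_le_ncard (s := G.edgeSet) (t := ↑l.toFinset)
    (fun e he => by simpa using hl e he)
  rw [Set.ncard_coe_finset] at this
  exact (h.trans_le this).not_ge l.toFinset_card_le

lemma move_mem_edgeSet_and_notMem_hist_s6 {G : SimpleGraph V} (hσ : σ.Valid G) (hτ : τ.Valid G)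
    {j : ℕ} (hj : j < G.edgeSet.ncard) : move σ τ j ∈ G.edgeSet ∧ move σ τ j ∉ hist σ τ j := by
  have h := exists_mem_edgeSet_notMem G (hist σ τ j) (by simpa [hist_eq_map_range] using hj)
  unfold move
  split
  · exact hσ _ h
  · exact hτ _ h

lemma injOn_move {G : SimpleGraph V} (hσ : σ.Valid G) (hτ : τ.Valid G) :
    Set.InjOn (move σ τ) (Set.Iio G.edgeSet.ncard) := by
  intro i hi j hj heq
  by_contra hne
  wlog hij : i < j generalizing i j
  · exact this hj hi heq.symm (Ne.symm hne) (by omega)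
  exact (move_mem_edgeSet_and_notMem_hist_s6 hσ hτ hj).2 (mem_hist.mpr ⟨i, hij, heq⟩)

end Play

section Degrees

variable {V W : Type*} {σ τ : Strategy V}

/- Both count move indices rather than edges; they are degrees of the colored graphs only as long
as all moves are legal, hence distinct. -/
open Classical in
noncomputable def playedDegree (σ τ : Strategy V) (v : V) (t : ℕ) : ℕ :=
  Nat.count (fun j => v ∈ move σ τ j) t

open Classical in
noncomputable def blueDegree (σ τ : Strategy V) (v : V) (t : ℕ) : ℕ :=
  Nat.count (fun j => j % 2 = 0 ∧ v ∈ move σ τ j) t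

open Classical in
lemma playedDegree_succ (v : V) (t : ℕ) :
    playedDegree σ τ v (t + 1) = playedDegree σ τ v t + if v ∈ move σ τ t then 1 else 0 :=
  Nat.count_succ _ _

open Classical in
lemma blueDegree_succ (v : V) (t : ℕ) :
    blueDegree σ τ v (t + 1) =
      blueDegree σ τ v t + if t % 2 = 0 ∧ v ∈ move σ τ t then 1 else 0 :=
  Nat.count_succ _ _

lemma playedDegree_le_degree {G : SimpleGraph V} (hσ : σ.Valid G) (hτ : τ.Valid G) {t : ℕ}
    (ht : t ≤ G.edgeSet.ncard) (v : V) [Fintype (G.neighborSet v)] :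
    playedDegree σ τ v t ≤ G.degree v := by
  classical
  rw [playedDegree, Nat.count_eq_card_filter_range, ← card_incidenceFinset_eq_degree]
  refine card_le_card_of_injOn (move σ τ) (fun j hj => ?_)
    ((injOn_move hσ hτ).mono fun j hj => ?_)
  · obtain ⟨hjt, hjv⟩ := mem_filter.mp hj
    rw [mem_coe, mem_incidenceFinset]
    exact ⟨(move_mem_edgeSet_and_notMem_hist_s6 hσ hτ ((mem_range.mp hjt).trans_le ht)).1, hjv⟩
  · exact (mem_range.mp (mem_filter.mp hj).1).trans_le ht

lemma degree_le_blueDegree {F : SimpleGraph W} {f : W ↪ V} {k : ℕ}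
    (hf : ∀ a b, F.Adj a b → s(f a, f b) ∈ {e | ∃ i ≤ k, e = move σ τ (2 * i)})
    (a : W) [Fintype (F.neighborSet a)] :
    F.degree a ≤ blueDegree σ τ (f a) (2 * k + 1) := by
  classical
  have hinj : Function.Injective fun b => s(f a, f b) :=
    fun b b' h => f.injective (Sym2.congr_right.mp h)
  rw [blueDegree, Nat.count_eq_card_filter_range, ← card_neighborFinset_eq_degree,
    ← card_image_of_injective _ hinj]
  refine (card_le_card fun e he => ?_).trans (card_image_le (f := move σ τ))
  obtain ⟨b, hb, rfl⟩ := mem_image.mp he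
  obtain ⟨i, hi, he⟩ := hf a b ((mem_neighborFinset _ _ _).mp hb)
  exact mem_image.mpr ⟨2 * i, mem_filter.mpr ⟨mem_range.mpr (by omega),
    Nat.mul_mod_right 2 i, he ▸ Sym2.mem_mk_left _ _⟩, he.symm⟩

end Degrees

def HasFreeEdge {V : Type*} (G : SimpleGraph V) (l : List (Sym2 V)) (v : V) : Prop :=
  ∃ e ∈ G.edgeSet, v ∈ e ∧ e ∉ l

lemma HasFreeEdge.mono {V : Type*} {G : SimpleGraph V} {l l' : List (Sym2 V)} {v : V}
    (h : HasFreeEdge G l' v) (hl : l ⊆ l') : HasFreeEdge G l v :=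
  have ⟨e, he, hve, hel⟩ := h
  ⟨e, he, hve, fun h => hel (hl h)⟩

section Pairing

variable {V : Type*} {G : SimpleGraph V} {σ τ : Strategy V} {v : V}
  (hσ : σ.Valid G) (hτ : τ.Valid G)
  (hresp : ∀ i, 2 * i < G.edgeSet.ncard → v ∈ move σ τ (2 * i) →
    HasFreeEdge G (hist σ τ (2 * i + 1)) v → v ∈ move σ τ (2 * i + 1))
include hσ hτ hresp

/- Alice can get ahead of Bob at `v` only with a move taking the last free edge at `v`. -/
open Classical in
lemma blueDegree_balanced {i : ℕ} (hi : 2 * i ≤ G.edgeSet.ncard) :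
    2 * blueDegree σ τ v (2 * i) ≤ playedDegree σ τ v (2 * i) + 1 ∧
      (HasFreeEdge G (hist σ τ (2 * i)) v →
        2 * blueDegree σ τ v (2 * i) ≤ playedDegree σ τ v (2 * i)) := by
  induction i with
  | zero => simp [blueDegree, playedDegree]
  | succ i ih =>
    obtain ⟨hle, hle_of_free⟩ := ih (by omega)
    have hi' : 2 * i < G.edgeSet.ncard := by omega
    have hsucc : 2 * (i + 1) = 2 * i + 1 + 1 := by ring
    have hb : blueDegree σ τ v (2 * (i + 1)) =
        blueDegree σ τ v (2 * i) + if v ∈ move σ τ (2 * i) then 1 else 0 := by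
      rw [hsucc, blueDegree_succ, blueDegree_succ]
      simp [Nat.mul_mod_right, Nat.add_mod]
    have hT : playedDegree σ τ v (2 * (i + 1)) = playedDegree σ τ v (2 * i) +
        (if v ∈ move σ τ (2 * i) then 1 else 0) + if v ∈ move σ τ (2 * i + 1) then 1 else 0 := by
      rw [hsucc, playedDegree_succ, playedDegree_succ]
    have hfree_mono : ∀ t ≤ 2 * (i + 1), HasFreeEdge G (hist σ τ (2 * (i + 1))) v →
        HasFreeEdge G (hist σ τ t) v := fun t ht h => h.mono (hist_subset_hist ht)
    rw [hb, hT]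
    by_cases hA : v ∈ move σ τ (2 * i)
    · have hlegal := move_mem_edgeSet_and_notMem_hist_s6 hσ hτ hi'
      have hbal := hle_of_free ⟨_, hlegal.1, hA, hlegal.2⟩
      by_cases hfree : HasFreeEdge G (hist σ τ (2 * i + 1)) v
      · rw [if_pos hA, if_pos (hresp i hi' hA hfree)]
        omega
      · refine ⟨by split_ifs <;> omega, fun h => absurd (hfree_mono _ (by omega) h) hfree⟩
    · have hbal_of_free h := hle_of_free (hfree_mono (2 * i) (by omega) h)
      rw [if_neg hA]
      constructor <;> split_ifs <;> omega

open Classical in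
lemma two_mul_blueDegree_le_degree_add_one {k : ℕ} (hk : 2 * k + 1 ≤ G.edgeSet.ncard)
    [Fintype (G.neighborSet v)] : 2 * blueDegree σ τ v (2 * k + 1) ≤ G.degree v + 1 := by
  obtain ⟨hle, hle_of_free⟩ := blueDegree_balanced hσ hτ hresp (i := k) (by omega)
  have hdeg := playedDegree_le_degree hσ hτ hk v
  rw [playedDegree_succ] at hdeg
  rw [blueDegree_succ]
  by_cases hA : v ∈ move σ τ (2 * k)
  · have hlegal := move_mem_edgeSet_and_notMem_hist_s6 hσ hτ (j := 2 * k) (by omega)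
    have := hle_of_free ⟨_, hlegal.1, hA, hlegal.2⟩
    rw [if_pos ⟨Nat.mul_mod_right 2 k, hA⟩]
    rw [if_pos hA] at hdeg
    omega
  · rw [if_neg fun h => hA h.2]
    omega

end Pairing

section Bipartite

variable {α β : Type*}

lemma exists_inl_of_mem_edgeSet {x y : α ⊕ β}
    (he : s(x, y) ∈ (completeBipartiteGraph α β).edgeSet) :
    (∃ c, x = Sum.inl c) ∨ ∃ c, y = Sum.inl c := by
  rw [mem_edgeSet, completeBipartiteGraph_adj] at he
  rcases he with ⟨hx, -⟩ | ⟨-, hy⟩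
  · exact Or.inl (Sum.isLeft_iff.mp hx)
  · exact Or.inr (Sum.isLeft_iff.mp hy)

lemma eq_of_inl_mem_of_inl_mem {e : Sym2 (α ⊕ β)}
    (he : e ∈ (completeBipartiteGraph α β).edgeSet) {a c : α}
    (ha : Sum.inl a ∈ e) (hc : Sum.inl c ∈ e) : a = c := by
  induction e using Sym2.ind with
  | _ x y =>
    rw [mem_edgeSet, completeBipartiteGraph_adj] at he
    rw [Sym2.mem_iff] at ha hc
    rcases ha with rfl | rfl <;> rcases hc with h | h <;> cases h <;> simp_all

lemma degree_inl_completeBipartiteGraph [Fintype β] (a : α)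
    [Fintype ((completeBipartiteGraph α β).neighborSet (Sum.inl a))] :
    (completeBipartiteGraph α β).degree (Sum.inl a) = Fintype.card β := by
  rw [← card_neighborSet_eq_degree]
  refine (Fintype.card_congr (Equiv.ofBijective
    (fun y => (⟨Sum.inr y, by simp⟩ : (completeBipartiteGraph α β).neighborSet (Sum.inl a)))
    ⟨fun y y' h => Sum.inr_injective (congrArg Subtype.val h), ?_⟩)).symm
  rintro ⟨v, hv⟩
  obtain ⟨y, rfl⟩ := Sum.isRight_iff.mp (by simpa using hv)
  exact ⟨y, rfl⟩

open Classical in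
noncomputable def respondAtLeft (ρ : Strategy (α ⊕ β)) : Strategy (α ⊕ β) := fun l =>
  if h : ∃ e ∈ (completeBipartiteGraph α β).edgeSet, e ∉ l ∧
      ∃ x ∈ l.getLast?, ∃ a, Sum.inl a ∈ x ∧ Sum.inl a ∈ e then h.choose
  else ρ l

lemma respondAtLeft_valid {ρ : Strategy (α ⊕ β)} (hρ : ρ.Valid (completeBipartiteGraph α β)) :
    (respondAtLeft ρ).Valid (completeBipartiteGraph α β) := by
  intro l hl
  unfold respondAtLeft
  split
  · next h => exact ⟨h.choose_spec.1, h.choose_spec.2.1⟩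
  · exact hρ l hl

lemma inl_mem_respondAtLeft (ρ : Strategy (α ⊕ β)) {l : List (Sym2 (α ⊕ β))} {x : Sym2 (α ⊕ β)}
    (hx : l.getLast? = some x) (hxE : x ∈ (completeBipartiteGraph α β).edgeSet) {c : α}
    (hcx : Sum.inl c ∈ x) (hfree : HasFreeEdge (completeBipartiteGraph α β) l (Sum.inl c)) :
    Sum.inl c ∈ respondAtLeft ρ l := by
  obtain ⟨e, he, hce, hel⟩ := hfree
  have h : ∃ e ∈ (completeBipartiteGraph α β).edgeSet, e ∉ l ∧
      ∃ x ∈ l.getLast?, ∃ a, Sum.inl a ∈ x ∧ Sum.inl a ∈ e :=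
    ⟨e, he, hel, x, hx, c, hcx, hce⟩
  rw [respondAtLeft, dif_pos h]
  obtain ⟨-, -, x', hx', a, hax, hae⟩ := h.choose_spec
  rw [hx, Option.mem_some_iff] at hx'
  subst hx'
  rwa [← eq_of_inl_mem_of_inl_mem hxE hax hcx]

variable {σ ρ : Strategy (α ⊕ β)} (hσ : σ.Valid (completeBipartiteGraph α β))
  (hρ : ρ.Valid (completeBipartiteGraph α β))
include hσ hρ

lemma inl_mem_move_respondAtLeft {c : α} {i : ℕ}
    (hi : 2 * i < (completeBipartiteGraph α β).edgeSet.ncard)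
    (hc : Sum.inl c ∈ move σ (respondAtLeft ρ) (2 * i))
    (hfree : HasFreeEdge (completeBipartiteGraph α β)
      (hist σ (respondAtLeft ρ) (2 * i + 1)) (Sum.inl c)) :
    Sum.inl c ∈ move σ (respondAtLeft ρ) (2 * i + 1) := by
  have hmove : move σ (respondAtLeft ρ) (2 * i + 1) =
      respondAtLeft ρ (hist σ (respondAtLeft ρ) (2 * i + 1)) := by
    rw [move, if_neg (by omega)]
  rw [hmove]
  exact inl_mem_respondAtLeft ρ List.getLast?_concat
    (move_mem_edgeSet_and_notMem_hist_s6 hσ (respondAtLeft_valid hρ) hi).1 hc hfree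

end Bipartite

section DoubleStar

lemma doubleStar_adj_inl_inr (m n : ℕ) : (doubleStar m n).Adj (Sum.inl 0) (Sum.inr 0) := by
  simp [doubleStar]

lemma succ_le_degree_doubleStar_inl (m n : ℕ)
    [Fintype ((doubleStar m n).neighborSet (Sum.inl 0))] :
    m + 1 ≤ (doubleStar m n).degree (Sum.inl 0) := by
  rw [← card_neighborFinset_eq_degree]
  calc m + 1 = #(insert (Sum.inr 0) ((univ.erase 0).map .inl) :
        Finset (Fin (m + 1) ⊕ Fin (n + 1))) := by
        rw [card_insert_of_notMem (by simp), card_map, card_erase_of_mem (mem_univ _), card_univ,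
          Fintype.card_fin, Nat.add_sub_cancel]
    _ ≤ _ := card_le_card fun y hy => by
      simp only [mem_insert, mem_map, mem_erase] at hy
      rw [mem_neighborFinset]
      rcases hy with rfl | ⟨j, ⟨hj, -⟩, rfl⟩
      · simp [doubleStar]
      · simpa [doubleStar] using Ne.symm hj

lemma succ_le_degree_doubleStar_inr (m n : ℕ)
    [Fintype ((doubleStar m n).neighborSet (Sum.inr 0))] :
    n + 1 ≤ (doubleStar m n).degree (Sum.inr 0) := by
  rw [← card_neighborFinset_eq_degree]
  calc n + 1 = #(insert (Sum.inl 0) ((univ.erase 0).map .inr) :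
        Finset (Fin (m + 1) ⊕ Fin (n + 1))) := by
        rw [card_insert_of_notMem (by simp), card_map, card_erase_of_mem (mem_univ _), card_univ,
          Fintype.card_fin, Nat.add_sub_cancel]
    _ ≤ _ := card_le_card fun y hy => by
      simp only [mem_insert, mem_map, mem_erase] at hy
      rw [mem_neighborFinset]
      rcases hy with rfl | ⟨j, ⟨hj, -⟩, rfl⟩
      · simp [doubleStar]
      · simpa [doubleStar] using Ne.symm hj

end DoubleStar

end AchievementGame

open AchievementGame

theorem stmt6_general (m n n₁ n₂ : ℕ) (hmn : m < n)
    (hwin : AliceWins (doubleStar m n) (completeBipartiteGraph (Fin n₁) (Fin n₂))) :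
    2 * m + 1 ≤ max n₁ n₂ := by
  classical
  obtain ⟨σ, hσ, hσwins⟩ := hwin
  have hτ := respondAtLeft_valid hσ
  obtain ⟨k, hk, ⟨f, hf⟩, -⟩ := hσwins _ hτ
  obtain ⟨c, hc⟩ : ∃ c, m + 1 ≤ blueDegree σ (respondAtLeft σ) (Sum.inl c) (2 * k + 1) := by
    obtain ⟨i, hi, he⟩ := hf _ _ (doubleStar_adj_inl_inr m n)
    have hedge := (move_mem_edgeSet_and_notMem_hist_s6 hσ hτ (j := 2 * i) (by omega)).1
    rw [← he] at hedge
    rcases exists_inl_of_mem_edgeSet hedge with ⟨c, hc⟩ | ⟨c, hc⟩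
    · exact ⟨c, hc ▸ (succ_le_degree_doubleStar_inl m n).trans (degree_le_blueDegree hf _)⟩
    · refine ⟨c, hc ▸ le_trans ?_ (degree_le_blueDegree hf _)⟩
      exact (Nat.succ_le_succ hmn.le).trans (succ_le_degree_doubleStar_inr m n)
  have hbound := two_mul_blueDegree_le_degree_add_one hσ hτ (v := Sum.inl c)
    (fun i hi hA hfree => inl_mem_move_respondAtLeft hσ hσ hi hA hfree) hk
  rw [degree_inl_completeBipartiteGraph, Fintype.card_fin] at hbound
  omega

/-- Let `m, n` be integers with `1 ≤ m < n ≤ 2m`. If Alice has a winning strategy in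
the achievement game `(S_{m,n}, K_{n₁,n₂}, +)`, then `max {n₁, n₂} ≥ 2m + 1`. -/
theorem stmt6 (m n n₁ n₂ : ℕ) (hm : 1 ≤ m) (hmn : m < n) (hn : n ≤ 2 * m)
    (hwin : AliceWins (doubleStar m n) (completeBipartiteGraph (Fin n₁) (Fin n₂))) :
    2 * m + 1 ≤ max n₁ n₂ :=
  stmt6_general m n n₁ n₂ hmn hwin
end
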